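/- Let X be a random variable valued in ZMod 2 and Z a random variable valued in a finite set S, on a common probability space. Then there exists a function g : S → ZMod 2 such that P[g(Z) = X] ≥ 1 − H[X | Z] / (2 · log 2). -/
import Mathlib


open MeasureTheory

/-- Shannon entropy (in nats) of a random variable `X` taking values in a finite type,
`H[X] = ∑ s, (-P[X = s]) * log P[X = s]`. -/
noncomputable def entropy {Ω S : Type*} [MeasurableSpace Ω] [Fintype S]
    (μ : Measure Ω) (X : Ω → S) : ℝ :=
  ∑ s : S, Real.negMulLog (μ (X ⁻¹' {s})).toReal

/-- Conditional Shannon entropy (in nats), `H[X | Z] = H[(X, Z)] - H[Z]` (chain rule). -/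
noncomputable def condEntropy {Ω S T : Type*} [MeasurableSpace Ω] [Fintype S] [Fintype T]
    (μ : Measure Ω) (X : Ω → S) (Z : Ω → T) : ℝ :=
  entropy μ (fun ω => (X ω, Z ω)) - entropy μ Z

lemma key_ineq {a b : ℝ} (ha : 0 ≤ a) (hb : 0 ≤ b) (hab : a ≤ b) :
    2 * Real.log 2 * a ≤ Real.negMulLog a + Real.negMulLog b - Real.negMulLog (a + b) := by
  rcases eq_or_lt_of_le (by positivity : (0:ℝ) ≤ a + b) with hp | hp
  · have ha0 : a = 0 := by linarith
    have hb0 : b = 0 := by linarith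
    simp [ha0, hb0]
  have hpne : a + b ≠ 0 := ne_of_gt hp
  obtain ⟨t, ht0, ht1, htp⟩ : ∃ t : ℝ, 0 ≤ t ∧ t ≤ 1 ∧ t * (a + b) = 2 * a := by
    refine ⟨2 * a / (a + b), by positivity, ?_, by field_simp⟩
    rw [div_le_one hp]; linarith
  have key := Real.concaveOn_negMulLog.2 (Set.mem_Ici.mpr le_rfl)
    (Set.mem_Ici.mpr (le_of_lt (by positivity : (0:ℝ) < (a+b)/2))) (by linarith : 0 ≤ 1 - t) ht0
    (by ring : (1 - t) + t = 1)
  have key2 := Real.concaveOn_negMulLog.2 (Set.mem_Ici.mpr hp.le)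
    (Set.mem_Ici.mpr (le_of_lt (by positivity : (0:ℝ) < (a+b)/2))) (by linarith : 0 ≤ 1 - t) ht0
    (by ring : (1 - t) + t = 1)
  have hea : (1 - t) • (0:ℝ) + t • ((a+b)/2) = a := by
    simp only [smul_eq_mul]; nlinarith
  have heb : (1 - t) • (a+b) + t • ((a+b)/2) = b := by
    simp only [smul_eq_mul]; nlinarith
  rw [hea] at key
  rw [heb] at key2
  have hhalf : Real.negMulLog ((a+b)/2)
      = (Real.negMulLog (a+b) + (a+b) * Real.log 2) / 2 := by
    rw [Real.negMulLog, Real.negMulLog, Real.log_div hpne (by norm_num)]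
    ring
  simp only [smul_eq_mul, Real.negMulLog_zero, hhalf] at key key2
  have h3 : t * (a + b) * Real.log 2 = 2 * a * Real.log 2 := by rw [htp]
  nlinarith [key, key2, h3]

lemma key_min {a b : ℝ} (ha : 0 ≤ a) (hb : 0 ≤ b) :
    2 * Real.log 2 * min a b
      ≤ Real.negMulLog a + Real.negMulLog b - Real.negMulLog (a + b) := by
  rcases le_total a b with h | h
  · rw [min_eq_left h]; exact key_ineq ha hb h
  · rw [min_eq_right h, add_comm a b]
    have := key_ineq hb ha h
    linarith

/-- For a `ZMod 2`-valued random variable `X` and a finitely-valued random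
variable `Z`, there is a decoder `g` with `P[g(Z) = X] ≥ 1 - H[X | Z] / (2 log 2)`. -/
theorem stmt_10 {Ω : Type*} [MeasurableSpace Ω] (μ : Measure Ω) [IsProbabilityMeasure μ]
    {S : Type*} [Fintype S] (X : Ω → ZMod 2) (Z : Ω → S)
    (hXm : ∀ x : ZMod 2, MeasurableSet (X ⁻¹' {x}))
    (hZm : ∀ s : S, MeasurableSet (Z ⁻¹' {s})) :
    ∃ g : S → ZMod 2,
      (μ {ω | g (Z ω) = X ω}).toReal ≥ 1 - condEntropy μ X Z / (2 * Real.log 2) := by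
  classical
  set a : S → ℝ := fun s => (μ (X ⁻¹' {0} ∩ Z ⁻¹' {s})).toReal with ha_def
  set b : S → ℝ := fun s => (μ (X ⁻¹' {1} ∩ Z ⁻¹' {s})).toReal with hb_def
  have ha0 : ∀ s, 0 ≤ a s := fun s => ENNReal.toReal_nonneg
  have hb0 : ∀ s, 0 ≤ b s := fun s => ENNReal.toReal_nonneg
  have hmXZ : ∀ (x : ZMod 2) (s : S), MeasurableSet (X ⁻¹' {x} ∩ Z ⁻¹' {s}) :=
    fun x s => (hXm x).inter (hZm s)
  -- splitting each Z-fiber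
  have hZsplit : ∀ s : S, Z ⁻¹' {s} = (X ⁻¹' {0} ∩ Z ⁻¹' {s}) ∪ (X ⁻¹' {1} ∩ Z ⁻¹' {s}) := by
    intro s
    ext ω
    have : X ω = 0 ∨ X ω = 1 := by revert ω; intro ω; exact (by decide : ∀ x : ZMod 2, x = 0 ∨ x = 1) (X ω)
    simp only [Set.mem_preimage, Set.mem_singleton_iff, Set.mem_union, Set.mem_inter_iff]
    tauto
  have hdisj01 : ∀ s : S, Disjoint (X ⁻¹' {(0 : ZMod 2)} ∩ Z ⁻¹' {s}) (X ⁻¹' {1} ∩ Z ⁻¹' {s}) := by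
    intro s
    refine Set.disjoint_left.mpr ?_
    rintro ω ⟨h0, -⟩ ⟨h1, -⟩
    simp only [Set.mem_preimage, Set.mem_singleton_iff] at h0 h1
    rw [h0] at h1; exact (by decide : (0 : ZMod 2) ≠ 1) h1
  have hsum : ∀ s : S, a s + b s = (μ (Z ⁻¹' {s})).toReal := by
    intro s
    rw [hZsplit s, measure_union (hdisj01 s) (hmXZ 1 s),
      ENNReal.toReal_add (measure_ne_top μ _) (measure_ne_top μ _)]
  -- entropy of the pair
  have hpair : entropy μ (fun ω => (X ω, Z ω))
      = ∑ s : S, (Real.negMulLog (a s) + Real.negMulLog (b s)) := by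
    rw [entropy, Fintype.sum_prod_type_right]
    refine Finset.sum_congr rfl fun s _ => ?_
    have hpre : ∀ x : ZMod 2,
        (fun ω => (X ω, Z ω)) ⁻¹' {(x, s)} = X ⁻¹' {x} ∩ Z ⁻¹' {s} := by
      intro x; ext ω; simp [Prod.ext_iff, and_comm]
    have h2 : ∑ x : ZMod 2, Real.negMulLog (μ ((fun ω => (X ω, Z ω)) ⁻¹' {(x, s)})).toReal
        = Real.negMulLog (μ ((fun ω => (X ω, Z ω)) ⁻¹' {((0:ZMod 2), s)})).toReal
          + Real.negMulLog (μ ((fun ω => (X ω, Z ω)) ⁻¹' {((1:ZMod 2), s)})).toReal :=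
      Fin.sum_univ_two _
    rw [h2, hpre 0, hpre 1]
  have hZent : entropy μ Z = ∑ s : S, Real.negMulLog (a s + b s) := by
    rw [entropy]
    exact Finset.sum_congr rfl fun s _ => by rw [hsum s]
  have hCE : condEntropy μ X Z
      = ∑ s : S, (Real.negMulLog (a s) + Real.negMulLog (b s) - Real.negMulLog (a s + b s)) := by
    rw [condEntropy, hpair, hZent, ← Finset.sum_sub_distrib]
  -- total mass
  have htotal : ∑ s : S, (a s + b s) = 1 := by
    have h1 : ∑ s : S, μ (Z ⁻¹' {s}) = 1 := by
      rw [sum_measure_preimage_singleton Finset.univ (fun s _ => hZm s)]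
      simp
    have h2 : ∑ s : S, (a s + b s) = (∑ s : S, μ (Z ⁻¹' {s})).toReal := by
      rw [ENNReal.toReal_sum (fun s _ => measure_ne_top μ _)]
      exact Finset.sum_congr rfl fun s _ => hsum s
    rw [h2, h1, ENNReal.toReal_one]
  -- the decoder
  set g : S → ZMod 2 := fun s => if a s < b s then 1 else 0 with hg_def
  refine ⟨g, ?_⟩
  -- probability of correct decoding
  have hset : {ω | g (Z ω) = X ω} = ⋃ s : S, (X ⁻¹' {g s} ∩ Z ⁻¹' {s}) := by
    ext ω
    simp only [Set.mem_setOf_eq, Set.mem_iUnion, Set.mem_inter_iff, Set.mem_preimage,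
      Set.mem_singleton_iff]
    constructor
    · intro h; exact ⟨Z ω, h.symm, rfl⟩
    · rintro ⟨s, hx, rfl⟩; exact hx.symm
  have hdisjU : Pairwise (Function.onFun Disjoint (fun s : S => X ⁻¹' {g s} ∩ Z ⁻¹' {s})) := by
    intro s t hst
    refine Set.disjoint_left.mpr ?_
    rintro ω ⟨-, hs⟩ ⟨-, ht⟩
    simp only [Set.mem_preimage, Set.mem_singleton_iff] at hs ht
    exact hst (hs ▸ ht ▸ rfl)
  have hcorrect : (μ {ω | g (Z ω) = X ω}).toReal = ∑ s : S, max (a s) (b s) := by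
    rw [hset, measure_iUnion hdisjU (fun s => (hXm (g s)).inter (hZm s)),
      tsum_fintype _, ENNReal.toReal_sum (fun s _ => measure_ne_top μ _)]
    refine Finset.sum_congr rfl fun s _ => ?_
    by_cases h : a s < b s
    · rw [hg_def]; simp only [h, if_true]
      rw [max_eq_right h.le]
    · rw [hg_def]; simp only [h, if_false]
      rw [max_eq_left (not_lt.mp h)]
  -- the estimate
  have hlog2 : 0 < Real.log 2 := Real.log_pos one_lt_two
  have hMbound : 2 * Real.log 2 * ∑ s : S, min (a s) (b s) ≤ condEntropy μ X Z := by
    rw [hCE, Finset.mul_sum]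
    exact Finset.sum_le_sum fun s _ => key_min (ha0 s) (hb0 s)
  have hmaxmin : ∀ s : S, max (a s) (b s) = (a s + b s) - min (a s) (b s) := by
    intro s; rcases le_total (a s) (b s) with h | h
    · rw [max_eq_right h, min_eq_left h]; ring
    · rw [max_eq_left h, min_eq_right h]; ring
  have hsum_max : ∑ s : S, max (a s) (b s) = 1 - ∑ s : S, min (a s) (b s) := by
    rw [← htotal, ← Finset.sum_sub_distrib]
    exact Finset.sum_congr rfl fun s _ => hmaxmin s
  rw [hcorrect, hsum_max, ge_iff_le, sub_le_sub_iff_left, le_div_iff₀ (by positivity)]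
  calc (∑ s : S, min (a s) (b s)) * (2 * Real.log 2)
      = 2 * Real.log 2 * ∑ s : S, min (a s) (b s) := by ring
    _ ≤ condEntropy μ X Z := hMbound
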